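/- For a measure μ on ℝ with finite moments and any real x_0 and n ≥ 1, μ({x_0}) ≤ K_{n−1}(x_0, x_0)^{−1}. -/

import Mathlib

/-!
Put `a j = p_j(x₀)` and `K = ∑_{j<n} a j ^ 2`. The polynomial `Q = ∑_{j<n} a j • p_j` satisfies
`Q(x₀) = K` and, by orthonormality, `∫ Q² dμ = K`. Keeping only the atom at `x₀` in the last
integral gives `μ({x₀}) K² ≤ K`, and `K ≥ p₀(x₀)² > 0` because `p₀` is a nonzero constant.
-/

open MeasureTheory Polynomial

section

variable {α : Type*} [MeasurableSpace α] {μ : Measure α}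

theorem measureReal_singleton_mul_le_integral [MeasurableSingletonClass α] {f : α → ℝ}
    (hf : Integrable f μ) (hf₀ : 0 ≤ f) (x : α) : μ.real {x} * f x ≤ ∫ t, f t ∂μ := by
  rw [← smul_eq_mul, ← integral_singleton]
  exact setIntegral_le_integral hf (Filter.Eventually.of_forall hf₀)

theorem integral_sq_sum_of_orthonormal {ι : Type*} [DecidableEq ι] {f : ι → α → ℝ}
    (hint : ∀ i j, Integrable (fun t => f i t * f j t) μ)
    (hortho : ∀ i j, ∫ t, f i t * f j t ∂μ = if i = j then 1 else 0)
    (s : Finset ι) (c : ι → ℝ) :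
    ∫ t, (∑ i ∈ s, c i * f i t) ^ 2 ∂μ = ∑ i ∈ s, c i ^ 2 := by
  have hterm : ∀ i j, Integrable (fun t => c i * f i t * (c j * f j t)) μ := fun i j =>
    ((hint i j).const_mul (c i * c j)).congr (Filter.Eventually.of_forall fun t => by ring)
  have hsum : ∀ i, Integrable (fun t => ∑ j ∈ s, c i * f i t * (c j * f j t)) μ := fun i =>
    integrable_finsetSum _ fun j _ => hterm i j
  have hpair : ∀ i j, ∫ t, c i * f i t * (c j * f j t) ∂μ = c i * c j * if i = j then 1 else 0 :=
    fun i j => by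
      rw [← hortho i j, ← integral_const_mul]
      congr 1; funext t; ring
  simp_rw [sq, Finset.sum_mul_sum]
  rw [integral_finsetSum _ fun i _ => hsum i]
  refine Finset.sum_congr rfl fun i hi => ?_
  rw [integral_finsetSum _ fun j _ => hterm i j]
  simp only [hpair, mul_ite, mul_one, mul_zero, Finset.sum_ite_eq, if_pos hi]

end

theorem Polynomial.integrable_eval_of_integrable_abs_pow {μ : Measure ℝ}
    (hmom : ∀ k : ℕ, Integrable (fun t => |t| ^ k) μ) (q : ℝ[X]) :
    Integrable (fun t => q.eval t) μ := by
  have hpow : ∀ k : ℕ, Integrable (fun t : ℝ => t ^ k) μ := fun k =>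
    (hmom k).mono' (measurable_id.pow_const k).aestronglyMeasurable
      (Filter.Eventually.of_forall fun t => by simp)
  simp_rw [eval_eq_sum_range]
  exact integrable_finsetSum _ fun k _ => (hpow k).const_mul _

theorem Polynomial.eval_ne_zero_of_natDegree_eq_zero {R : Type*} [Semiring R] {q : R[X]}
    (hq₀ : q ≠ 0) (hq : q.natDegree = 0) (x : R) : q.eval x ≠ 0 := by
  rw [eq_C_of_natDegree_eq_zero hq] at hq₀ ⊢
  simpa using hq₀

/-- The mass of any point is bounded by the inverse diagonal CD kernel:
`μ({x₀}) ≤ K_{n−1}(x₀,x₀)⁻¹`. -/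
theorem point_mass_le_inv_CD
    (μ : Measure ℝ)
    (hmom : ∀ k : ℕ, Integrable (fun t => |t| ^ k) μ)
    (p : ℕ → Polynomial ℝ)
    (hdeg : ∀ j, (p j).natDegree = j)
    (hortho : ∀ j k, ∫ t, (p j).eval t * (p k).eval t ∂μ = if j = k then 1 else 0)
    (n : ℕ) (hn : 1 ≤ n) (x₀ : ℝ) :
    (μ {x₀}).toReal ≤ (∑ j ∈ Finset.range n, ((p j).eval x₀) ^ 2)⁻¹ := by
  set K := ∑ j ∈ Finset.range n, ((p j).eval x₀) ^ 2
  have hint : ∀ q : ℝ[X], Integrable (fun t => q.eval t) μ :=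
    integrable_eval_of_integrable_abs_pow hmom
  have hK : 0 < K := by
    have hp₀ : p 0 ≠ 0 := fun h => by simpa [h] using hortho 0 0
    have h₀ : (p 0).eval x₀ ≠ 0 := eval_ne_zero_of_natDegree_eq_zero hp₀ (hdeg 0) x₀
    calc 0 < ((p 0).eval x₀) ^ 2 := by positivity
      _ ≤ K := Finset.single_le_sum (f := fun j => ((p j).eval x₀) ^ 2)
          (fun j _ => sq_nonneg _) (Finset.mem_range.2 hn)
  set Q : ℝ → ℝ := fun t => ∑ j ∈ Finset.range n, (p j).eval x₀ * (p j).eval t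
  have hQx₀ : Q x₀ = K := Finset.sum_congr rfl fun j _ => (sq _).symm
  have hQ : ∫ t, Q t ^ 2 ∂μ = K :=
    integral_sq_sum_of_orthonormal (fun j k => by simpa using hint (p j * p k)) hortho _ _
  have hQint : Integrable (fun t => Q t ^ 2) μ := by
    convert hint ((∑ j ∈ Finset.range n, C ((p j).eval x₀) * p j) ^ 2) using 2 with t
    simp [Q, eval_finsetSum]
  have hatom := measureReal_singleton_mul_le_integral hQint (fun t => sq_nonneg _) x₀
  rw [hQ, hQx₀] at hatom
  rw [← measureReal_def, ← one_div, le_div_iff₀ hK]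
  nlinarith
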